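/- Let K ⊆ S² be a spherically convex body with piecewise smooth boundary whose spherical centroid g_s(K) is defined. Then K is contained in the open hemisphere centered at g_s(K), i.e., ⟨x, g_s(K)⟩ > 0 for every x ∈ K. -/

import Mathlib

open Real Set MeasureTheory Metric Filter
open scoped RealInnerProductSpace ENNReal Topology

noncomputable section

/-- Euclidean 3-space; the unit sphere `S²` is `Metric.sphere (0 : E3) 1`. -/
abbrev E3 : Type := EuclideanSpace ℝ (Fin 3)

/-- The spherical distance `d_s(x,y) = arccos ⟨x,y⟩`. -/
def sphDist (x y : E3) : ℝ := Real.arccos ⟪x, y⟫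

/-- The shorter great-circle arc (spherical segment) joining two non-antipodal
unit vectors: the radial projection of the Euclidean segment-cone. -/
def sphSeg (x y : E3) : Set E3 :=
  {z | ∃ a b : ℝ, 0 ≤ a ∧ 0 ≤ b ∧ a • x + b • y ≠ 0 ∧
      z = ‖a • x + b • y‖⁻¹ • (a • x + b • y)}

/-- A set is spherically convex if it consists of unit vectors, is contained in an
open hemisphere, and contains the shorter arc joining any two of its (non-antipodal)
points. -/
def SphConvex (K : Set E3) : Prop :=
  K ⊆ sphere (0 : E3) 1 ∧ (∃ e : E3, ‖e‖ = 1 ∧ ∀ x ∈ K, 0 < ⟪e, x⟫) ∧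
    ∀ x ∈ K, ∀ y ∈ K, x ≠ -y → sphSeg x y ⊆ K

/-- Relative interior of a subset of the sphere (interior within the sphere). -/
def relInt (K : Set E3) : Set E3 :=
  {x | ∃ ε : ℝ, 0 < ε ∧ sphere (0 : E3) 1 ∩ ball x ε ⊆ K}

/-- A spherical convex body: compact, spherically convex, with nonempty
(relative) interior. -/
def SphBody (K : Set E3) : Prop :=
  IsCompact K ∧ SphConvex K ∧ (K ∩ relInt K).Nonempty

/-- Relative boundary of a subset of the sphere. -/
def relFrontier (K : Set E3) : Set E3 := K \ relInt K

/-- Perimeter: 1-dimensional Hausdorff measure of the (relative) boundary. -/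
def sphPerim (K : Set E3) : ℝ≥0∞ := μH[1] (relFrontier K)

/-- Spherical diameter: supremum of pairwise spherical distances. -/
def sphDiam (X : Set E3) : ℝ := sSup {d | ∃ x ∈ X, ∃ y ∈ X, d = sphDist x y}

/-- The point of `S²` with latitude `θ` (signed distance from the great circle `L`
in the `(x,y)`-plane) and longitude `φ` (signed distance along a distance curve from
the half great circle `H` in the `(x,z)`-plane). -/
def sphPt (θ φ : ℝ) : E3 :=
  (WithLp.equiv 2 (Fin 3 → ℝ)).symm
    ![Real.cos θ * Real.cos φ, Real.cos θ * Real.sin φ, Real.sin θ]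

/-- The center `c = (1,0,0)` of the fixed open hemisphere `S`. -/
def ce : E3 := sphPt 0 0

/-- The fixed open hemisphere `S` centered at `c = (1,0,0)`. -/
def hemi : Set E3 := {p ∈ sphere (0 : E3) 1 | 0 < p 0}

/-- The distance curve `C_θ ⊆ S` with axis `L` at signed spherical distance `θ`
from `L`; `C_0 = L`. -/
def distCurve (θ : ℝ) : Set E3 := {p | ∃ φ ∈ Ioo (-(π/2)) (π/2), p = sphPt θ φ}

/-- The set of longitudes `φ` at which the distance curve `C_θ` meets `K`. -/
def sliceSet (K : Set E3) (θ : ℝ) : Set ℝ :=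
  {φ | φ ∈ Ioo (-(π/2)) (π/2) ∧ sphPt θ φ ∈ K}

/-- The spherical Steiner symmetral `σ_{L,H}(K)` with respect to the standard pair
`(L,H)`: on each distance curve `C_θ` meeting `K`, the arc `K ∩ C_θ` is replaced by
the closed subarc of `C_θ` of the same (angular) length centered at `C_θ ∩ H`
(the point of longitude `0`). -/
def steiner (K : Set E3) : Set E3 :=
  {p | ∃ θ ∈ Ioo (-(π/2)) (π/2), ∃ φ : ℝ, p = sphPt θ φ ∧ (sliceSet K θ).Nonempty ∧
      |φ| ≤ (sSup (sliceSet K θ) - sInf (sliceSet K θ)) / 2}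

/-- The connectedness property: `K ∩ C` is connected (possibly empty or a point)
for every distance curve `C` with axis `L`. -/
def ConnProp (K : Set E3) : Prop := ∀ θ : ℝ, IsPreconnected (K ∩ distCurve θ)

/-- Angular length of the arc `K ∩ C_θ` (zero if the arc is empty or a point). -/
def angLen (K : Set E3) (θ : ℝ) : ℝ := sSup (sliceSet K θ) - sInf (sliceSet K θ)

/-- The monotonicity part of the angular monotonicity property: the angular length
of `K ∩ C_θ` is nonincreasing for `θ ≥ 0` and nondecreasing for `θ ≤ 0`. -/
def AngMonoLen (K : Set E3) : Prop :=
  (∀ θ₁ θ₂ : ℝ, 0 ≤ θ₁ → θ₁ ≤ θ₂ → angLen K θ₂ ≤ angLen K θ₁) ∧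
  (∀ θ₁ θ₂ : ℝ, θ₁ ≤ θ₂ → θ₂ ≤ 0 → angLen K θ₁ ≤ angLen K θ₂)

/-- The angular monotonicity property (including the connectedness of all the
arcs `K ∩ C_θ`). -/
def AngMono (K : Set E3) : Prop := ConnProp K ∧ AngMonoLen K

/-- `K` is symmetric with respect to the spherical point reflection in `c`. -/
def cSymm (K : Set E3) : Prop := ∀ x ∈ K, (2 * ⟪x, ce⟫) • ce - x ∈ K

/-- The closed spherical cap (ball) of radius `r` centered at `x`. -/
def cap (x : E3) (r : ℝ) : Set E3 := {y ∈ sphere (0 : E3) 1 | sphDist x y ≤ r}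

/-- Rotation of `S²` around the axis through `c = (1,0,0)` by angle `α`. -/
def rotc (α : ℝ) (p : E3) : E3 :=
  (WithLp.equiv 2 (Fin 3 → ℝ)).symm
    ![p 0, Real.cos α * p 1 - Real.sin α * p 2, Real.sin α * p 1 + Real.cos α * p 2]

/-- The Steiner symmetrization `σ_{L',H'}` with `L' ∩ H' = {c}`, where `(L',H')`
is the standard pair `(L,H)` rotated around `c` by angle `α`. -/
def steinerAt (α : ℝ) (K : Set E3) : Set E3 := rotc α '' steiner (rotc (-α) '' K)

/-- The general Steiner symmetrization on `S²` with respect to the frame obtained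
from the standard one by the orthogonal map `g`. -/
def steinerG (g : E3 ≃ₗᵢ[ℝ] E3) (K : Set E3) : Set E3 := ⇑g '' steiner (⇑g.symm '' K)

/-- The result of applying a finite sequence of Steiner symmetrizations to `K`. -/
def steinerSeq : Set E3 → List (E3 ≃ₗᵢ[ℝ] E3) → Set E3
  | K, [] => K
  | K, g :: gs => steinerSeq (steinerG g K) gs

/-- A finite sequence of Steiner symmetrizations is applicable to `K`: at each step
the current set lies in the open hemisphere centered at the intersection point of the
current axes and satisfies the angular monotonicity property with respect to the
current symmetrization. -/
def Applicable : Set E3 → List (E3 ≃ₗᵢ[ℝ] E3) → Prop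
  | _, [] => True
  | K, g :: gs => (⇑g.symm '' K ⊆ hemi ∧ AngMono (⇑g.symm '' K)) ∧ Applicable (steinerG g K) gs

/-- The spherical convex hull: intersection of all spherically convex sets
containing the given set. -/
def sphConvexHull (A : Set E3) : Set E3 := ⋂₀ {C | SphConvex C ∧ A ⊆ C}

/-- `P` is a spherically convex polygon with at most `N` vertices: the spherical
convex hull of at most `N` unit vectors contained in an open hemisphere. -/
def IsPolyN (N : ℕ) (P : Set E3) : Prop :=
  ∃ V : Finset E3, V.card ≤ N ∧ (V : Set E3) ⊆ sphere (0 : E3) 1 ∧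
    (∃ e : E3, ‖e‖ = 1 ∧ ∀ v ∈ V, 0 < ⟪e, v⟫) ∧ P = sphConvexHull (V : Set E3)

/-- `A_N(X)`: supremum of the areas of spherically convex polygons with at most `N`
vertices contained in `X`. -/
def AN (N : ℕ) (X : Set E3) : ℝ≥0∞ :=
  ⨆ (P : Set E3) (_ : IsPolyN N P ∧ P ⊆ X), μH[2] P

/-- First moment (vector-valued integral) of a subset of the sphere. -/
def sphMoment (A : Set E3) : E3 := ∫ u in A, u ∂μH[2]

/-- The spherical centroid `g_s(A)`: the normalized first moment. -/
def sphCentroid (A : Set E3) : E3 := ‖sphMoment A‖⁻¹ • sphMoment A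

/-! ### Auxiliary lemmas for the proof -/

section AuxLemmas

/-- Perturbation bound for normalization. -/
lemma normalize_sub_normalize (a b : E3) (ha : a ≠ 0) (hb : b ≠ 0) :
    ‖‖a‖⁻¹ • a - ‖b‖⁻¹ • b‖ ≤ 2 * ‖a - b‖ / ‖b‖ := by
  have hbn : (0:ℝ) < ‖b‖ := norm_pos_iff.mpr hb
  have han : (0:ℝ) < ‖a‖ := norm_pos_iff.mpr ha
  have key : ‖a‖⁻¹ • a - ‖b‖⁻¹ • b = ‖b‖⁻¹ • (a - b) + (‖a‖⁻¹ - ‖b‖⁻¹) • a := by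
    module
  rw [key]
  have h1 : ‖‖b‖⁻¹ • (a - b)‖ = ‖a - b‖ / ‖b‖ := by
    rw [norm_smul]; simp [abs_of_pos (inv_pos.mpr hbn)]; ring
  have h2 : ‖(‖a‖⁻¹ - ‖b‖⁻¹) • a‖ ≤ ‖a - b‖ / ‖b‖ := by
    rw [norm_smul, Real.norm_eq_abs]
    have e1 : |‖a‖⁻¹ - ‖b‖⁻¹| * ‖a‖ = |‖b‖ - ‖a‖| / ‖b‖ := by
      rw [show ‖a‖⁻¹ - ‖b‖⁻¹ = (‖b‖ - ‖a‖) / (‖a‖ * ‖b‖) by field_simp,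
        abs_div, abs_of_pos (mul_pos han hbn)]
      field_simp
    rw [e1]
    gcongr
    calc |‖b‖ - ‖a‖| ≤ ‖b - a‖ := abs_norm_sub_norm_le b a
      _ = ‖a - b‖ := norm_sub_rev _ _
  calc ‖‖b‖⁻¹ • (a - b) + (‖a‖⁻¹ - ‖b‖⁻¹) • a‖
      ≤ ‖‖b‖⁻¹ • (a - b)‖ + ‖(‖a‖⁻¹ - ‖b‖⁻¹) • a‖ := norm_add_le _ _
    _ ≤ ‖a - b‖ / ‖b‖ + ‖a - b‖ / ‖b‖ := by rw [h1]; exact add_le_add le_rfl h2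
    _ = 2 * ‖a - b‖ / ‖b‖ := by ring

/-- Reflection across the plane orthogonal to `x`. -/
def reflx (x u : E3) : E3 := u - (2 * ⟪x, u⟫) • x

variable {x : E3}

lemma reflx_norm (hx : ‖x‖ = 1) (u : E3) : ‖reflx x u‖ = ‖u‖ := by
  have h : ‖reflx x u‖ ^ 2 = ‖u‖ ^ 2 := by
    rw [reflx, norm_sub_sq_real, norm_smul]
    rw [real_inner_smul_right, real_inner_comm]
    simp [Real.norm_eq_abs, hx, mul_pow, sq_abs]
    ring
  have := norm_nonneg (reflx x u); have := norm_nonneg u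
  nlinarith [h]

lemma reflx_inner (hx : ‖x‖ = 1) (u : E3) : ⟪x, reflx x u⟫ = -⟪x, u⟫ := by
  rw [reflx, inner_sub_right, real_inner_smul_right, real_inner_self_eq_norm_sq, hx]
  ring

lemma reflx_invol (hx : ‖x‖ = 1) : Function.Involutive (reflx x) := by
  intro u
  nth_rewrite 1 [reflx]
  rw [reflx_inner hx u, reflx]
  module

lemma reflx_isometry (hx : ‖x‖ = 1) : Isometry (reflx x) := by
  apply Isometry.of_dist_eq
  intro u v
  have : reflx x u - reflx x v = reflx x (u - v) := by
    simp only [reflx, inner_sub_right]; module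
  rw [dist_eq_norm, dist_eq_norm, this, reflx_norm hx]

/-- Reflection as an isometry equivalence. -/
def reflE (hx : ‖x‖ = 1) : E3 ≃ᵢ E3 :=
  { toEquiv := (reflx_invol hx).toPerm _
    isometry_toFun := reflx_isometry hx }

lemma reflE_apply (hx : ‖x‖ = 1) (u : E3) : reflE hx u = reflx x u := rfl

lemma reflx_neg_self (hx : ‖x‖ = 1) : reflx x (-x) = x := by
  rw [reflx, inner_neg_right, real_inner_self_eq_norm_sq, hx]
  module

lemma pi_ball_le_E2_ball {ρ : ℝ} (hρ : 0 < ρ) :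
    ball (0 : Fin 2 → ℝ) (ρ/2) ⊆
      (WithLp.equiv 2 (Fin 2 → ℝ)) '' (ball (0 : EuclideanSpace ℝ (Fin 2)) ρ) := by
  intro y hy
  simp only [mem_ball, dist_zero_right] at hy
  refine ⟨(WithLp.equiv 2 (Fin 2 → ℝ)).symm y, ?_, by simp⟩
  simp only [mem_ball, dist_zero_right]
  set x := (WithLp.equiv 2 (Fin 2 → ℝ)).symm y
  have hx : ‖x‖ = Real.sqrt (∑ i, ‖x i‖ ^ 2) := EuclideanSpace.norm_eq x
  have hcoord : ∀ i, ‖x i‖ < ρ/2 := by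
    intro i
    have := norm_le_pi_norm y i
    calc ‖x i‖ = ‖y i‖ := rfl
      _ ≤ ‖y‖ := this
      _ < ρ/2 := hy
  rw [hx]
  have hsum : (∑ i, ‖x i‖ ^ 2) < ρ ^ 2 := by
    rw [Fin.sum_univ_two]
    have h0 := hcoord 0; have h1 := hcoord 1
    nlinarith [norm_nonneg (x 0), norm_nonneg (x 1)]
  calc Real.sqrt (∑ i, ‖x i‖ ^ 2) < Real.sqrt (ρ ^ 2) := by
        apply Real.sqrt_lt_sqrt (by positivity) hsum
    _ = ρ := by rw [Real.sqrt_sq hρ.le]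

lemma E2_ball_pos {ρ : ℝ} (hρ : 0 < ρ) :
    0 < μH[2] (ball (0 : EuclideanSpace ℝ (Fin 2)) ρ) := by
  have hpi : (μH[2] : Measure (Fin 2 → ℝ)) = volume := by
    simpa using (MeasureTheory.hausdorffMeasure_pi_real (ι := Fin 2))
  have hlip : LipschitzWith 1 (WithLp.equiv 2 (Fin 2 → ℝ)) := PiLp.lipschitzWith_ofLp 2 _
  have h1 : μH[2] ((WithLp.equiv 2 (Fin 2 → ℝ)) '' (ball 0 ρ)) ≤
      μH[2] (ball (0 : EuclideanSpace ℝ (Fin 2)) ρ) := by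
    simpa using hlip.hausdorffMeasure_image_le (by norm_num : (0:ℝ) ≤ 2) (ball 0 ρ)
  have h2 : (0:ℝ≥0∞) < μH[2] (ball (0 : Fin 2 → ℝ) (ρ/2)) := by
    rw [hpi]
    exact measure_ball_pos _ _ (by linarith)
  calc (0:ℝ≥0∞) < μH[2] (ball (0 : Fin 2 → ℝ) (ρ/2)) := h2
    _ ≤ μH[2] ((WithLp.equiv 2 (Fin 2 → ℝ)) '' (ball 0 ρ)) :=
        measure_mono (pi_ball_le_E2_ball hρ)
    _ ≤ _ := h1

set_option maxHeartbeats 1000000 in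
/-- A spherical cap has positive 2-dimensional Hausdorff measure. -/
lemma cap_measure_pos (w : E3) (hw : ‖w‖ = 1) {r : ℝ} (hr : 0 < r) :
    0 < μH[2] (sphere (0:E3) 1 ∩ ball w r) := by
  have hw0 : w ≠ 0 := by intro h; rw [h] at hw; simp at hw
  haveI hfact : Fact (Module.finrank ℝ E3 = 2 + 1) := ⟨by simp [finrank_euclideanSpace_fin]⟩
  have hdim : Module.finrank ℝ ((ℝ ∙ w)ᗮ) = 2 := Submodule.finrank_orthogonal_span_singleton hw0
  let b : OrthonormalBasis (Fin 2) ℝ ((ℝ ∙ w)ᗮ) :=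
    (stdOrthonormalBasis ℝ ((ℝ ∙ w)ᗮ)).reindex (finCongr hdim)
  let L : EuclideanSpace ℝ (Fin 2) →ₗᵢ[ℝ] E3 :=
    (Submodule.subtypeₗᵢ _).comp b.repr.symm.toLinearIsometry
  have hLmem : ∀ t, L t ∈ (ℝ ∙ w)ᗮ := fun t => (b.repr.symm t).2
  have hLw : ∀ t, ⟪w, L t⟫ = 0 := by
    intro t
    exact (Submodule.mem_orthogonal_singleton_iff_inner_right).mp (hLmem t)
  set P : E3 → E3 := fun u => u - ⟪w, u⟫ • w with hPdef
  have hPnorm : ∀ z, ‖P z‖ ≤ ‖z‖ := by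
    intro z
    have hsq : ‖P z‖ ^ 2 = ‖z‖ ^ 2 - ⟪w, z⟫ ^ 2 := by
      simp only [hPdef]
      rw [norm_sub_sq_real, real_inner_smul_right, real_inner_comm z w, norm_smul]
      simp [Real.norm_eq_abs, hw, mul_pow, sq_abs]
      ring
    nlinarith [norm_nonneg (P z), norm_nonneg z, sq_nonneg (⟪w, z⟫)]
  have hPlip : LipschitzWith 1 P := by
    apply LipschitzWith.of_dist_le_mul
    intro u v
    have : P u - P v = P (u - v) := by simp only [hPdef, inner_sub_right]; module
    rw [dist_eq_norm, dist_eq_norm, this]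
    simpa using hPnorm _
  set ρ : ℝ := min (r/2) 2⁻¹ with hρdef
  have hρ0 : 0 < ρ := lt_min (by linarith) (by norm_num)
  have hρr : ρ ≤ r/2 := min_le_left _ _
  have hρ1 : ρ ≤ 2⁻¹ := min_le_right _ _
  have hincl : ⇑L '' (ball 0 ρ) ⊆ P '' (sphere (0:E3) 1 ∩ ball w r) := by
    rintro - ⟨t, ht, rfl⟩
    simp only [mem_ball, dist_zero_right] at ht
    set v : E3 := L t with hvdef
    have hv : ‖v‖ < ρ := by rw [hvdef, L.norm_map]; exact ht
    have hv1 : ‖v‖ ≤ 1 := by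
      have := hv.le.trans hρ1; linarith
    have hwv : ⟪w, v⟫ = 0 := hLw t
    set s : ℝ := Real.sqrt (1 - ‖v‖^2) with hsdef
    have hs0 : 0 ≤ s := Real.sqrt_nonneg _
    have hs2 : s ^ 2 = 1 - ‖v‖ ^ 2 := Real.sq_sqrt (by nlinarith [hv1, norm_nonneg v])
    have hs1 : s ≤ 1 := by nlinarith [hs2, hs0, sq_nonneg ‖v‖]
    set u : E3 := s • w + v with hudef
    have hwu : ⟪w, u⟫ = s := by
      rw [hudef, inner_add_right, real_inner_smul_right, real_inner_self_eq_norm_sq, hw, hwv]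
      ring
    have hun : ‖u‖ = 1 := by
      have : ‖u‖ ^ 2 = 1 := by
        rw [hudef, norm_add_sq_real, real_inner_smul_left, hwv, norm_smul]
        simp [Real.norm_eq_abs, abs_of_nonneg hs0, hw, mul_pow, sq_abs]
        nlinarith
      nlinarith [norm_nonneg u]
    have hudist : ‖u - w‖ < r := by
      have huw : u - w = (s - 1) • w + v := by rw [hudef]; module
      have h2 : ‖u - w‖ ^ 2 = (s-1)^2 + ‖v‖^2 := by
        rw [huw, norm_add_sq_real, real_inner_smul_left, hwv, norm_smul]
        simp [Real.norm_eq_abs, hw, mul_pow, sq_abs]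
      have hs3 : (1 - s) ≤ ‖v‖ ^ 2 := by nlinarith
      have hvr : ‖v‖ < r/2 := lt_of_lt_of_le hv hρr
      nlinarith [norm_nonneg (u - w), norm_nonneg v]
    have hPu : P u = v := by
      simp only [hPdef]; rw [hwu, hudef]; module
    exact ⟨u, ⟨mem_sphere_zero_iff_norm.mpr hun, by rwa [mem_ball, dist_eq_norm]⟩, hPu⟩
  calc (0:ℝ≥0∞) < μH[2] (ball (0 : EuclideanSpace ℝ (Fin 2)) ρ) := E2_ball_pos hρ0
    _ = μH[2] (⇑L '' (ball 0 ρ)) :=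
        (L.isometry.hausdorffMeasure_image (Or.inl (by norm_num)) _).symm
    _ ≤ μH[2] (P '' (sphere (0:E3) 1 ∩ ball w r)) := measure_mono hincl
    _ ≤ 1 ^ (2:ℝ) * μH[2] (sphere (0:E3) 1 ∩ ball w r) :=
        hPlip.hausdorffMeasure_image_le (by norm_num) _
    _ = μH[2] (sphere (0:E3) 1 ∩ ball w r) := by simp

end AuxLemmas

set_option maxHeartbeats 1000000 in
/-- A spherical convex body `K ⊆ S²` with piecewise smooth
boundary whose spherical centroid is defined is contained in the open hemisphere
centered at its spherical centroid. -/
theorem body_in_hemisphere_of_centroid (K : Set E3) (hK : SphBody K)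
    (hsmooth : ∃ (k : ℕ) (γ : Fin k → ℝ → E3),
      (∀ i, ContDiff ℝ (⊤ : ℕ∞) (γ i)) ∧ relFrontier K = ⋃ i, γ i '' Icc (0 : ℝ) 1)
    (hmom : sphMoment K ≠ 0) :
    ∀ x ∈ K, 0 < ⟪x, sphCentroid K⟫ := by
  obtain ⟨hcomp, ⟨hsub, ⟨e, he1, hepos⟩, hconv⟩, y, hyK, ε, hε, hcap⟩ := hK
  intro x hxK
  have hx : ‖x‖ = 1 := mem_sphere_zero_iff_norm.mp (hsub hxK)
  have hy1 : ‖y‖ = 1 := mem_sphere_zero_iff_norm.mp (hsub hyK)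
  -- integrability of the identity on `K`
  have hInt : IntegrableOn (fun u : E3 => u) K μH[2] := by
    by_contra h
    exact hmom (integral_undef h)
  have hKmeas : MeasurableSet K := hcomp.isClosed.measurableSet
  have hKfin : μH[2] K < ∞ := by
    have h1 : Integrable (fun _ : E3 => (1:ℝ)) (μH[2].restrict K) := by
      apply hInt.norm.congr
      filter_upwards [ae_restrict_mem hKmeas] with u hu
      exact mem_sphere_zero_iff_norm.mp (hsub hu)
    rcases integrable_const_iff.mp h1 with h | h
    · norm_num at h
    · haveI := h; simpa using measure_lt_top (μH[2].restrict K) univ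
  have hfInt : IntegrableOn (fun u : E3 => ⟪x, u⟫) K μH[2] := by
    have h := ContinuousLinearMap.integrable_comp (innerSL ℝ x) hInt
    simpa [IntegrableOn] using h
  have hmm : ⟪x, sphMoment K⟫ = ∫ u in K, ⟪x, u⟫ ∂μH[2] := by
    rw [sphMoment]
    exact (integral_inner (𝕜 := ℝ) hInt x).symm
  -- separation of `K` from `-x`
  have hxe := hepos x hxK
  have hnxK : -x ∉ K := by
    intro h
    have h2 := hepos _ h
    rw [inner_neg_right] at h2
    linarith
  have hinf : 0 < infDist (-x) K :=
    (hcomp.isClosed.notMem_iff_infDist_pos ⟨x, hxK⟩).mp hnxK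
  set δ : ℝ := infDist (-x) K / 2 with hδdef
  have hδpos : 0 < δ := half_pos hinf
  have hball : ∀ u ∈ K, δ ≤ dist u (-x) := by
    intro u hu
    have h1 : infDist (-x) K ≤ dist (-x) u := infDist_le_dist_of_mem hu
    rw [dist_comm]
    linarith
  -- reflection across the plane orthogonal to `x` maps the negative part into `K`
  have hrefl_mem : ∀ u ∈ K, ⟪x, u⟫ < 0 → reflx x u ∈ K := by
    intro u hu hneg
    have hu1 : ‖u‖ = 1 := mem_sphere_zero_iff_norm.mp (hsub hu)
    have hn : ‖reflx x u‖ = 1 := by rw [reflx_norm hx, hu1]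
    have heq : (-(2*⟪x,u⟫)) • x + (1:ℝ) • u = reflx x u := by rw [reflx]; module
    have hne0 : (-(2*⟪x,u⟫)) • x + (1:ℝ) • u ≠ 0 := by
      rw [heq]
      intro h
      rw [h, norm_zero] at hn
      norm_num at hn
    have hmem : reflx x u ∈ sphSeg x u :=
      ⟨-(2*⟪x,u⟫), 1, by linarith, zero_le_one, hne0, by rw [heq, hn]; simp⟩
    have hxu : x ≠ -u := by
      intro h
      have h1 := hepos u hu
      rw [h, inner_neg_right] at hxe
      linarith
    exact hconv x hxK u hu hxu hmem
  -- construction of an interior point `w` near `x`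
  set s0 : ℝ := min (δ/8) 8⁻¹ with hs0def
  have hs0pos : 0 < s0 := lt_min (by linarith) (by norm_num)
  have hs0δ : s0 ≤ δ/8 := min_le_left _ _
  have hs08 : s0 ≤ 8⁻¹ := min_le_right _ _
  set a0 : E3 := x + s0 • y with ha0def
  have ha0e : 0 < ⟪e, a0⟫ := by
    rw [ha0def, inner_add_right, real_inner_smul_right]
    have := hepos y hyK
    nlinarith
  have ha0ne : a0 ≠ 0 := by
    intro h
    rw [h, inner_zero_right] at ha0e
    exact lt_irrefl _ ha0e
  have ha0pos : 0 < ‖a0‖ := norm_pos_iff.mpr ha0ne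
  set N : ℝ := ‖a0‖⁻¹ with hNdef
  have hNpos : 0 < N := inv_pos.mpr ha0pos
  set w : E3 := N • a0 with hwdef
  have hw1 : ‖w‖ = 1 := by
    rw [hwdef, norm_smul, hNdef, Real.norm_eq_abs, abs_of_pos hNpos]
    exact inv_mul_cancel₀ ha0pos.ne'
  have hwx : ‖w - x‖ ≤ 2 * s0 := by
    have hxne0 : x ≠ 0 := by intro h; rw [h, norm_zero] at hx; norm_num at hx
    have h := normalize_sub_normalize a0 x ha0ne hxne0
    rw [hx] at h
    simp only [inv_one, one_smul, div_one] at h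
    have h2 : a0 - x = s0 • y := by rw [ha0def]; module
    rw [h2, norm_smul, Real.norm_eq_abs, abs_of_pos hs0pos, hy1, mul_one] at h
    simpa [hwdef, hNdef] using h
  -- `w` is a relative interior point of `K`
  set r : ℝ := min (N*s0/2) (N*s0*ε/8) with hrdef
  have hrpos : 0 < r := lt_min (by positivity) (by positivity)
  have hr1 : r ≤ N*s0/2 := min_le_left _ _
  have hr2' : r ≤ N*s0*ε/8 := min_le_right _ _
  have hint_w : sphere (0:E3) 1 ∩ ball w r ⊆ K := by
    rintro p ⟨hp1, hp2⟩
    have hp1' : ‖p‖ = 1 := mem_sphere_zero_iff_norm.mp hp1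
    rw [mem_ball, dist_eq_norm] at hp2
    set q : E3 := p - N • x with hqdef
    have hq0 : w - N • x = (N * s0) • y := by rw [hwdef, ha0def]; module
    have hq0n : ‖w - N • x‖ = N * s0 := by
      rw [hq0, norm_smul, Real.norm_eq_abs, abs_of_pos (by positivity), hy1, mul_one]
    have hqdiff : ‖q - (w - N • x)‖ < r := by
      have heq : q - (w - N • x) = p - w := by rw [hqdef]; module
      rwa [heq]
    have hqn : N * s0 / 2 ≤ ‖q‖ := by
      have h1 : ‖w - N•x‖ - ‖q‖ ≤ ‖(w - N•x) - q‖ := norm_sub_norm_le _ _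
      have h1' : ‖(w - N•x) - q‖ = ‖q - (w - N•x)‖ := norm_sub_rev _ _
      rw [h1', hq0n] at h1
      linarith
    have hqne : q ≠ 0 := by
      intro h
      rw [h, norm_zero] at hqn
      nlinarith
    have hq0ne : w - N • x ≠ 0 := by
      intro h
      rw [h, norm_zero] at hq0n
      nlinarith
    set z : E3 := ‖q‖⁻¹ • q with hzdef
    have hqpos : 0 < ‖q‖ := norm_pos_iff.mpr hqne
    have hz1 : ‖z‖ = 1 := by
      rw [hzdef, norm_smul, Real.norm_eq_abs, abs_of_pos (inv_pos.mpr hqpos)]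
      field_simp
    have hyq : ‖w - N•x‖⁻¹ • (w - N•x) = y := by
      rw [hq0n, hq0, smul_smul, inv_mul_cancel₀ (by positivity)]
      simp
    have hzy : ‖z - y‖ < ε := by
      have h := normalize_sub_normalize q (w - N•x) hqne hq0ne
      rw [hyq, hq0n] at h
      have hNs : 0 < N * s0 := by positivity
      calc ‖z - y‖ ≤ 2 * ‖q - (w - N•x)‖ / (N*s0) := h
        _ < 2 * r / (N*s0) := by gcongr
        _ ≤ 2 * (N*s0*ε/8) / (N*s0) := by gcongr
        _ = ε/4 := by field_simp; ring
        _ < ε := by linarith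
    have hzK : z ∈ K := hcap ⟨mem_sphere_zero_iff_norm.mpr hz1,
      by rw [mem_ball, dist_eq_norm]; exact hzy⟩
    have hpe : N • x + ‖q‖ • z = p := by
      rw [hzdef, smul_smul, mul_inv_cancel₀ (ne_of_gt hqpos), one_smul, hqdef]
      module
    have hp_seg : p ∈ sphSeg x z := by
      refine ⟨N, ‖q‖, hNpos.le, norm_nonneg q, ?_, ?_⟩
      · rw [hpe]
        intro h
        rw [h, norm_zero] at hp1'
        norm_num at hp1'
      · rw [hpe, hp1']
        simp
    have hxz : x ≠ -z := by
      intro h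
      have h1 := hepos z hzK
      rw [h, inner_neg_right] at hxe
      linarith
    exact hconv x hxK z hzK hxz hp_seg
  -- the window `W` near `x`
  set r2 : ℝ := min r (min (δ/2) 2⁻¹) with hr2def
  have hr2pos : 0 < r2 := lt_min hrpos (lt_min (by linarith) (by norm_num))
  set W : Set E3 := sphere (0:E3) 1 ∩ ball w r2 with hWdef
  have hWK : W ⊆ K := fun p hp =>
    hint_w ⟨hp.1, mem_ball.mpr (lt_of_lt_of_le (mem_ball.mp hp.2) (min_le_left _ _))⟩
  have hWx : ∀ u ∈ W, ‖u - x‖ < δ ∧ ‖u - x‖ < 1 := by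
    rintro u ⟨hu1, hu2⟩
    rw [mem_ball, dist_eq_norm] at hu2
    have h1 : ‖u - x‖ ≤ ‖u - w‖ + ‖w - x‖ := by
      calc ‖u - x‖ = ‖(u - w) + (w - x)‖ := by congr 1; module
        _ ≤ _ := norm_add_le _ _
    constructor
    · have h2 : ‖u - w‖ < δ/2 :=
        lt_of_lt_of_le hu2 ((min_le_right _ _).trans (min_le_left _ _))
      linarith
    · have h2 : ‖u - w‖ < 2⁻¹ :=
        lt_of_lt_of_le hu2 ((min_le_right _ _).trans (min_le_right _ _))
      have h3 : (8:ℝ)⁻¹ ≤ 1/8 := by norm_num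
      linarith
  have hWf : ∀ u ∈ W, 1/2 ≤ ⟪x, u⟫ := by
    intro u hu
    have hu1 : ‖u‖ = 1 := mem_sphere_zero_iff_norm.mp hu.1
    have h2 := (hWx u hu).2
    have hxu : ‖x - u‖^2 = 2 - 2 * ⟪x,u⟫ := by
      rw [norm_sub_sq_real, hx, hu1]
      ring
    have h3 : ‖x - u‖ = ‖u - x‖ := norm_sub_rev _ _
    nlinarith [norm_nonneg (u - x)]
  -- splitting of `K`
  set Kp : Set E3 := K ∩ {u : E3 | 0 ≤ ⟪x, u⟫} with hKpdef
  set Km : Set E3 := K ∩ {u : E3 | ⟪x, u⟫ < 0} with hKmdef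
  have hfcont : Continuous (fun u : E3 => ⟪x, u⟫) := continuous_const.inner continuous_id
  have hKpmeas : MeasurableSet Kp :=
    hKmeas.inter (measurableSet_le measurable_const hfcont.measurable)
  have hKmmeas : MeasurableSet Km :=
    hKmeas.inter (measurableSet_lt hfcont.measurable measurable_const)
  have hunion : K = Kp ∪ Km := by
    ext u
    constructor
    · intro hu
      rcases le_or_gt 0 (⟪x, u⟫) with h | h
      · exact Or.inl ⟨hu, h⟩
      · exact Or.inr ⟨hu, h⟩
    · rintro (h | h) <;> exact h.1
  have hdisj : Disjoint Kp Km := by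
    rw [Set.disjoint_left]
    rintro u ⟨_, h0⟩ ⟨_, h1⟩
    simp only [mem_setOf_eq] at h0 h1
    linarith
  have hIp : IntegrableOn (fun u : E3 => ⟪x, u⟫) Kp μH[2] := hfInt.mono_set inter_subset_left
  have hIm : IntegrableOn (fun u : E3 => ⟪x, u⟫) Km μH[2] := hfInt.mono_set inter_subset_left
  have hsum : ∫ u in K, ⟪x, u⟫ ∂μH[2]
      = (∫ u in Kp, ⟪x, u⟫ ∂μH[2]) + ∫ u in Km, ⟪x, u⟫ ∂μH[2] := by
    rw [hunion]
    exact setIntegral_union hdisj hKmmeas hIp hIm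
  -- the reflected image of the negative part
  set R : Set E3 := reflx x '' Km with hRdef
  have hcoe : ⇑(reflE hx) = reflx x := rfl
  have hmp : MeasurePreserving (reflE hx) μH[2] μH[2] :=
    (reflE hx).measurePreserving_hausdorffMeasure 2
  have hemb : MeasurableEmbedding (reflE hx) :=
    (reflE hx).toHomeomorph.measurableEmbedding
  have hRmeas : MeasurableSet R := by
    have h := hemb.measurableSet_image' hKmmeas
    rwa [hcoe] at h
  have hRsub : R ⊆ Kp := by
    rintro - ⟨u, hu, rfl⟩
    have hneg : ⟪x, u⟫ < 0 := hu.2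
    refine ⟨hrefl_mem u hu.1 hneg, ?_⟩
    show 0 ≤ ⟪x, reflx x u⟫
    rw [reflx_inner hx u]
    linarith
  have hIR : ∫ u in R, ⟪x, u⟫ ∂μH[2] = - ∫ u in Km, ⟪x, u⟫ ∂μH[2] := by
    have h1 : ∫ u in (⇑(reflE hx)) '' Km, ⟪x, u⟫ ∂μH[2]
        = ∫ u in Km, ⟪x, reflE hx u⟫ ∂μH[2] :=
      hmp.setIntegral_image_emb hemb _ Km
    rw [hRdef, ← hcoe, h1]
    have h2 : (fun u : E3 => ⟪x, reflE hx u⟫) = fun u : E3 => -⟪x, u⟫ := by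
      funext u
      rw [hcoe]
      exact reflx_inner hx u
    rw [h2, integral_neg]
  have hdiffeq : ∫ u in Kp \ R, ⟪x, u⟫ ∂μH[2]
      = (∫ u in Kp, ⟪x, u⟫ ∂μH[2]) - ∫ u in R, ⟪x, u⟫ ∂μH[2] :=
    integral_diff hRmeas hIp hRsub
  have hmain : ⟪x, sphMoment K⟫ = ∫ u in Kp \ R, ⟪x, u⟫ ∂μH[2] := by
    rw [hmm, hsum, hdiffeq, hIR]
    ring
  -- `W` avoids `R`
  have hWR : ∀ u ∈ W, u ∉ R := by
    rintro u hu ⟨v, hv, rfl⟩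
    have h1 : dist (reflx x v) x = dist v (-x) := by
      have h := (reflx_isometry hx).dist_eq v (-x)
      rw [reflx_neg_self hx] at h
      exact h
    have h2 : ‖reflx x v - x‖ < δ := (hWx _ hu).1
    have h3 := hball v hv.1
    rw [dist_eq_norm] at h1
    rw [h1] at h2
    linarith
  have hWsub : W ⊆ Kp \ R := by
    intro u hu
    refine ⟨⟨hWK hu, ?_⟩, hWR u hu⟩
    have := hWf u hu
    show (0:ℝ) ≤ ⟪x, u⟫
    linarith
  have hWmeas : MeasurableSet W :=
    (isClosed_sphere).measurableSet.inter measurableSet_ball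
  have hWpos : 0 < μH[2] W := cap_measure_pos w hw1 hr2pos
  have hWfin : μH[2] W < ∞ := lt_of_le_of_lt (measure_mono hWK) hKfin
  have hlow : 1/2 * (μH[2] W).toReal ≤ ∫ u in W, ⟪x, u⟫ ∂μH[2] :=
    by have h := setIntegral_ge_of_const_le_real hWmeas hWfin.ne hWf (hfInt.mono_set hWK); rw [measureReal_def] at h; exact h
  have hup : ∫ u in W, ⟪x, u⟫ ∂μH[2] ≤ ∫ u in Kp \ R, ⟪x, u⟫ ∂μH[2] := by
    apply setIntegral_mono_set (hfInt.mono_set (fun u hu => hu.1.1))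
    · filter_upwards [ae_restrict_mem (hKpmeas.diff hRmeas)] with u hu
      exact hu.1.2
    · exact HasSubset.Subset.eventuallyLE hWsub
  have hmompos : 0 < ⟪x, sphMoment K⟫ := by
    rw [hmain]
    have h0 : 0 < (μH[2] W).toReal := ENNReal.toReal_pos hWpos.ne' hWfin.ne
    linarith
  rw [sphCentroid, real_inner_smul_right]
  exact mul_pos (inv_pos.mpr (norm_pos_iff.mpr hmom)) hmompos
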